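/- arXiv:2207.05416 — 2 statements merged into one kernel-verified Lean document; each statement's English description precedes it below -/
import Mathlib

section
/- Let n ≥ 2, let ♢ be a symmetrization on 𝒦ⁿ belonging to the family ℱ, let H be a proper nonzero linear subspace of ℝⁿ and let K ∈ 𝒦ⁿ. Then W(♢_H K) ≤ W(K), where W denotes the mean width. -/
open Filter Topology Metric Set Pointwise MeasureTheory

noncomputable section

abbrev Euc (n : ℕ) := EuclideanSpace ℝ (Fin n)

def IsConvexBody {n : ℕ} (K : Set (Euc n)) : Prop :=
  K.Nonempty ∧ IsCompact K ∧ Convex ℝ K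

def reflMap {n : ℕ} (H : Submodule ℝ (Euc n)) : Euc n → Euc n :=
  (Submodule.reflection H : Euc n ≃ₗᵢ[ℝ] Euc n)

structure IsInF {n : ℕ} (D : Submodule ℝ (Euc n) → Set (Euc n) → Set (Euc n)) : Prop where
  body : ∀ ⦃H : Submodule ℝ (Euc n)⦄, H ≠ ⊥ → H ≠ ⊤ → ∀ ⦃K⦄, IsConvexBody K →
    IsConvexBody (D H K)
  symmetric : ∀ ⦃H : Submodule ℝ (Euc n)⦄, H ≠ ⊥ → H ≠ ⊤ → ∀ ⦃K⦄, IsConvexBody K →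
    reflMap H '' D H K = D H K
  mono : ∀ ⦃H : Submodule ℝ (Euc n)⦄, H ≠ ⊥ → H ≠ ⊤ → ∀ ⦃K L⦄, IsConvexBody K →
    IsConvexBody L → K ⊆ L → D H K ⊆ D H L
  transInv : ∀ ⦃H : Submodule ℝ (Euc n)⦄, H ≠ ⊥ → H ≠ ⊤ → ∀ ⦃K⦄, IsConvexBody K →
    reflMap H '' K = K → ∀ x ∈ Hᗮ, D H (K + {x}) = K
  inv : ∀ ⦃H : Submodule ℝ (Euc n)⦄, H ≠ ⊥ → H ≠ ⊤ → ∀ ⦃K⦄, IsConvexBody K →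
    reflMap H '' K = K → D H K = K

/-- The support function of `K`. -/
def suppFn {n : ℕ} (K : Set (Euc n)) (ν : Euc n) : ℝ :=
  sSup ((fun y => (inner ℝ ν y : ℝ)) '' K)

/-- The mean width of `K`: `(1/ω_n) ∫_{S^{n-1}} (h_K(ν) + h_K(-ν)) dν`, where the surface
measure on the unit sphere is the `(n-1)`-dimensional Hausdorff measure and `ω_n` is its
total mass. -/
def meanWidth {n : ℕ} (K : Set (Euc n)) : ℝ :=
  ((μH[(n : ℝ) - 1] (sphere (0 : Euc n) 1)).toReal)⁻¹ *
    ∫ ν in sphere (0 : Euc n) 1, (suppFn K ν + suppFn K (-ν)) ∂(μH[(n : ℝ) - 1])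

/-!
For `x ∈ Hᗮ` let `C` be the closed convex hull of `(K - x) ∪ R_H (K - x)`. It is an `H`-symmetric
convex body with `K ⊆ C + x`, so monotonicity and `Hᗮ`-translation invariance give `♢_H K ⊆ C`,
hence `h_{♢_H K}(ν) ≤ max (h_K(ν) - ⟪ν, x⟫) (h_K(R_H ν) + ⟪ν, x⟫)`. Choosing `⟪ν, x⟫` to balance
the two terms bounds `h_{♢_H K}(ν)` by the average of `h_K(ν)` and `h_K(R_H ν)`; integrating over
the sphere, whose Hausdorff measure `R_H` preserves, gives `W(♢_H K) ≤ W(K)`.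
-/

section InnerProductSpace

variable {E : Type*} [NormedAddCommGroup E] [InnerProductSpace ℝ E]

theorem Submodule.exists_mem_orthogonal_inner_eq {H : Submodule ℝ E} [H.HasOrthogonalProjection]
    {ν : E} (hν : ν ∉ H) (t : ℝ) : ∃ x ∈ Hᗮ, inner ℝ ν x = t := by
  rw [← H.orthogonal_orthogonal, Submodule.mem_orthogonal] at hν
  push Not at hν
  obtain ⟨u, hu, hνu⟩ := hν
  rw [real_inner_comm] at hνu
  exact ⟨(t / inner ℝ ν u) • u, Hᗮ.smul_mem _ hu, by
    rw [real_inner_smul_right, div_mul_cancel₀ t hνu]⟩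

theorem Submodule.inner_reflection_right (H : Submodule ℝ E) [H.HasOrthogonalProjection]
    (x y : E) : inner ℝ x (H.reflection y) = inner ℝ (H.reflection x) y := by
  rw [LinearIsometryEquiv.inner_map_eq_flip, Submodule.reflection_symm]

theorem Submodule.reflection_image_closure_convexHull_union (H : Submodule ℝ E)
    [H.HasOrthogonalProjection] (A : Set E) :
    H.reflection '' closure (convexHull ℝ (A ∪ H.reflection '' A)) =
      closure (convexHull ℝ (A ∪ H.reflection '' A)) := by
  have hsymm : H.reflection '' (A ∪ H.reflection '' A) = A ∪ H.reflection '' A := by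
    rw [Set.image_union, Set.image_image]
    simp only [Submodule.reflection_reflection, Set.image_id', union_comm]
  rw [← LinearIsometryEquiv.coe_toHomeomorph, Homeomorph.image_closure,
    LinearIsometryEquiv.coe_toHomeomorph,
    IsLinearMap.image_convexHull ⟨H.reflection.map_add, H.reflection.map_smul⟩, hsymm]

end InnerProductSpace

section SupportFunction

variable {n : ℕ}

theorem suppFn_le {K : Set (Euc n)} {ν : Euc n} {m : ℝ} (hK : K.Nonempty)
    (h : ∀ y ∈ K, inner ℝ ν y ≤ m) : suppFn K ν ≤ m :=
  csSup_le (hK.image _) (forall_mem_image.2 h)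

theorem le_suppFn {K : Set (Euc n)} (hK : IsCompact K) (ν : Euc n) {y : Euc n} (hy : y ∈ K) :
    inner ℝ ν y ≤ suppFn K ν :=
  le_csSup (hK.image (continuous_const.inner continuous_id)).bddAbove (mem_image_of_mem _ hy)

theorem continuous_suppFn {K : Set (Euc n)} (hK : IsCompact K) : Continuous (suppFn K) :=
  hK.continuous_sSup (continuous_fst.inner continuous_snd)

theorem suppFn_le_of_subset_closure_convexHull {L s : Set (Euc n)} {ν : Euc n} {m : ℝ}
    (hL : L.Nonempty) (hLs : L ⊆ closure (convexHull ℝ s)) (h : ∀ y ∈ s, inner ℝ ν y ≤ m) :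
    suppFn L ν ≤ m := by
  have hhalf : closure (convexHull ℝ s) ⊆ {y | inner ℝ ν y ≤ m} :=
    closure_minimal (convexHull_min h (convex_halfSpace_le (innerₛₗ ℝ ν).isLinear m))
      (isClosed_le (continuous_const.inner continuous_id) continuous_const)
  exact suppFn_le hL fun y hy => hhalf (hLs hy)

theorem isConvexBody_closure_convexHull {s : Set (Euc n)} (hs : s.Nonempty)
    (hsb : Bornology.IsBounded s) : IsConvexBody (closure (convexHull ℝ s)) :=
  ⟨(hs.convexHull).closure, (isBounded_convexHull.2 hsb).isCompact_closure,
    (convex_convexHull ℝ s).closure⟩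

end SupportFunction

section SphereIntegral

variable {E : Type*} [NormedAddCommGroup E] [NormedSpace ℝ E] [MeasurableSpace E] [BorelSpace E]

theorem setIntegral_sphere_comp_linearIsometryEquiv {G : Type*} [NormedAddCommGroup G]
    [NormedSpace ℝ G] (e : E ≃ₗᵢ[ℝ] E) (d : ℝ) (f : E → G) :
    ∫ ν in sphere (0 : E) 1, f (e ν) ∂μH[d] = ∫ ν in sphere (0 : E) 1, f ν ∂μH[d] := by
  have hpre : e.toIsometryEquiv ⁻¹' sphere 0 1 = sphere 0 1 := by
    rw [IsometryEquiv.preimage_sphere, LinearIsometryEquiv.coe_symm_toIsometryEquiv, map_zero]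
  have hmp := (e.toIsometryEquiv.measurePreserving_hausdorffMeasure d).restrict_preimage
    (isClosed_sphere (x := (0 : E)) (ε := 1)).measurableSet
  rw [hpre] at hmp
  exact hmp.integral_comp e.toHomeomorph.measurableEmbedding f

theorem setIntegral_sphere_le_of_le_average [ProperSpace E] {d : ℝ} (e : E ≃ₗᵢ[ℝ] E)
    {f g : E → ℝ} (hf : Continuous f) (hg : Continuous g) (hfin : μH[d] (sphere (0 : E) 1) ≠ ⊤)
    (h : ∀ ν, g ν ≤ (f ν + f (e ν)) / 2) :
    ∫ ν in sphere (0 : E) 1, g ν ∂μH[d] ≤ ∫ ν in sphere (0 : E) 1, f ν ∂μH[d] := by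
  have hint : ∀ φ : E → ℝ, Continuous φ → IntegrableOn φ (sphere 0 1) μH[d] := fun φ hφ =>
    hφ.continuousOn.integrableOn_of_subset_isCompact (isCompact_sphere 0 1)
      isClosed_sphere.measurableSet subset_rfl hfin
  have hfe : IntegrableOn (fun ν => f (e ν)) (sphere 0 1) μH[d] := hint _ (hf.comp e.continuous)
  calc ∫ ν in sphere (0 : E) 1, g ν ∂μH[d]
      ≤ ∫ ν in sphere (0 : E) 1, (f ν + f (e ν)) / 2 ∂μH[d] :=
        integral_mono (hint g hg) (((hint f hf).add hfe).div_const 2) h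
    _ = ((∫ ν in sphere (0 : E) 1, f ν ∂μH[d]) + ∫ ν in sphere (0 : E) 1, f (e ν) ∂μH[d]) / 2 := by
        rw [integral_div, integral_add (hint f hf) hfe]
    _ = ∫ ν in sphere (0 : E) 1, f ν ∂μH[d] := by
        rw [setIntegral_sphere_comp_linearIsometryEquiv, add_self_div_two]

end SphereIntegral

section MeanWidth

variable {n : ℕ}

def widthFn (K : Set (Euc n)) (ν : Euc n) : ℝ :=
  suppFn K ν + suppFn K (-ν)

theorem continuous_widthFn {K : Set (Euc n)} (hK : IsCompact K) : Continuous (widthFn K) :=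
  (continuous_suppFn hK).add ((continuous_suppFn hK).comp continuous_neg)

theorem meanWidth_le_of_widthFn_le_average {K L : Set (Euc n)} (hK : IsCompact K)
    (hL : IsCompact L) (e : Euc n ≃ₗᵢ[ℝ] Euc n)
    (h : ∀ ν, widthFn L ν ≤ (widthFn K ν + widthFn K (e ν)) / 2) :
    meanWidth L ≤ meanWidth K := by
  obtain hfin | hinf := ne_or_eq (μH[(n : ℝ) - 1] (sphere (0 : Euc n) 1)) ⊤
  · exact mul_le_mul_of_nonneg_left
      (setIntegral_sphere_le_of_le_average e (continuous_widthFn hK) (continuous_widthFn hL) hfin h)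
      (by positivity)
  · -- the normalising factor `(⊤ : ℝ≥0∞).toReal⁻¹` is `0`
    simp [meanWidth, hinf]

end MeanWidth

namespace IsInF

variable {n : ℕ} {D : Submodule ℝ (Euc n) → Set (Euc n) → Set (Euc n)} (hD : IsInF D)
  {H : Submodule ℝ (Euc n)} (hb : H ≠ ⊥) (ht : H ≠ ⊤) {K : Set (Euc n)} (hK : IsConvexBody K)
include hD hb ht hK

theorem subset_of_subset_add {C : Set (Euc n)} (hC : IsConvexBody C)
    (hCsymm : reflMap H '' C = C) {x : Euc n} (hx : x ∈ Hᗮ) (hKC : K ⊆ C + {x}) :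
    D H K ⊆ C := by
  have hCx : IsConvexBody (C + {x}) :=
    ⟨hC.1.add (singleton_nonempty x), hC.2.1.add isCompact_singleton,
      hC.2.2.add (convex_singleton x)⟩
  simpa only [hD.transInv hb ht hC hCsymm x hx] using hD.mono hb ht hK hCx hKC

theorem suppFn_le_max {x : Euc n} (hx : x ∈ Hᗮ) (ν : Euc n) :
    suppFn (D H K) ν ≤
      max (suppFn K ν - inner ℝ ν x) (suppFn K (reflMap H ν) + inner ℝ ν x) := by
  set A := (· - x) '' K
  have hA : IsCompact A := hK.2.1.image (continuous_id.sub continuous_const)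
  have hC : IsConvexBody (closure (convexHull ℝ (A ∪ H.reflection '' A))) :=
    isConvexBody_closure_convexHull ((hK.1.image _).mono subset_union_left)
      (hA.union (hA.image H.reflection.continuous)).isBounded
  have hKC : K ⊆ closure (convexHull ℝ (A ∪ H.reflection '' A)) + {x} := fun y hy => by
    rw [add_singleton]
    exact ⟨y - x, subset_closure (subset_convexHull ℝ _ (Or.inl ⟨y, hy, rfl⟩)), sub_add_cancel y x⟩
  refine suppFn_le_of_subset_closure_convexHull (hD.body hb ht hK).1
    (hD.subset_of_subset_add hb ht hK hC (H.reflection_image_closure_convexHull_union A) hx hKC) ?_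
  rintro _ (⟨y, hy, rfl⟩ | ⟨_, ⟨y, hy, rfl⟩, rfl⟩)
  · calc inner ℝ ν (y - x) = inner ℝ ν y - inner ℝ ν x := inner_sub_right ..
      _ ≤ suppFn K ν - inner ℝ ν x := by gcongr; exact le_suppFn hK.2.1 ν hy
      _ ≤ _ := le_max_left ..
  · calc inner ℝ ν (H.reflection (y - x)) = inner ℝ (H.reflection ν) y + inner ℝ ν x := by
          rw [map_sub, H.reflection_mem_subspace_orthogonalComplement_eq_neg hx, sub_neg_eq_add,
            inner_add_right, H.inner_reflection_right]
      _ ≤ suppFn K (reflMap H ν) + inner ℝ ν x := by gcongr; exact le_suppFn hK.2.1 _ hy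
      _ ≤ _ := le_max_right ..

theorem suppFn_le_average (ν : Euc n) :
    suppFn (D H K) ν ≤ (suppFn K ν + suppFn K (reflMap H ν)) / 2 := by
  by_cases hν : ν ∈ H
  · have hRν : reflMap H ν = ν := H.reflection_mem_subspace_eq_self hν
    simpa [hRν] using hD.suppFn_le_max hb ht hK Hᗮ.zero_mem ν
  · set t := (suppFn K ν - suppFn K (reflMap H ν)) / 2 with ht_eq
    obtain ⟨x, hx, hνx⟩ := H.exists_mem_orthogonal_inner_eq hν t
    calc suppFn (D H K) ν ≤ max (suppFn K ν - t) (suppFn K (reflMap H ν) + t) := by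
          simpa only [hνx] using hD.suppFn_le_max hb ht hK hx ν
      _ = _ := by rw [max_eq_left (by linarith)]; linarith

theorem widthFn_le_average (ν : Euc n) :
    widthFn (D H K) ν ≤ (widthFn K ν + widthFn K (reflMap H ν)) / 2 := by
  have h₁ := hD.suppFn_le_average hb ht hK ν
  have h₂ := hD.suppFn_le_average hb ht hK (-ν)
  rw [show reflMap H (-ν) = -reflMap H ν from map_neg H.reflection ν] at h₂
  unfold widthFn
  linarith

end IsInF

theorem stmt7_general {n : ℕ}
    (D : Submodule ℝ (Euc n) → Set (Euc n) → Set (Euc n)) (hD : IsInF D)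
    (H : Submodule ℝ (Euc n)) (hb : H ≠ ⊥) (ht : H ≠ ⊤)
    (K : Set (Euc n)) (hK : IsConvexBody K) :
    meanWidth (D H K) ≤ meanWidth K :=
  meanWidth_le_of_widthFn_le_average hK.2.1 (hD.body hb ht hK).2.1 H.reflection
    (hD.widthFn_le_average hb ht hK)

/-- Any symmetrization in the family `ℱ` does not increase the mean width of a convex body. -/
theorem stmt7 {n : ℕ} (hn : 2 ≤ n)
    (D : Submodule ℝ (Euc n) → Set (Euc n) → Set (Euc n)) (hD : IsInF D)
    (H : Submodule ℝ (Euc n)) (hb : H ≠ ⊥) (ht : H ≠ ⊤)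
    (K : Set (Euc n)) (hK : IsConvexBody K) :
    meanWidth (D H K) ≤ meanWidth K :=
  stmt7_general D hD H hb ht K hK
end
end

section
/- Let ♢ be a symmetrization on 𝒦² belonging to the family ℱ (in particular ♢ may be the Minkowski symmetrization). Then there exist a sequence (U_m)_{m≥1} of lines through the origin in ℝ² whose unit direction vectors are dense in S¹, and a convex body K ∈ 𝒦² with nonempty interior, such that the sequence K_m := (♢_{U_m} ∘ ⋯ ∘ ♢_{U_1})(K) does not converge in the Hausdorff metric. -/
open Filter Topology Metric Set Pointwise MeasureTheory

noncomputable section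

/-- `iterSeq T k K j = T_{k+j} ∘ ⋯ ∘ T_k` applied to `K`. -/
def iterSeq {n : ℕ} (T : ℕ → Set (Euc n) → Set (Euc n)) (k : ℕ) (K : Set (Euc n)) :
    ℕ → Set (Euc n)
  | 0 => T k K
  | j + 1 => T (k + j + 1) (iterSeq T k K j)

/-!
Take for `K` the unit disc centred at `e₀ = (1, 0)` and let `U_m` be the line at angle
`θ_m = ∑_{i<m} 1/(2(i+1))`. Every `♢ ∈ ℱ` maps a disc to the congruent disc centred at the
orthogonal projection of its centre onto the line: the projected disc is `U`-symmetric and the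
original disc is a translate of it orthogonal to `U`. Hence `K_m` is the unit disc centred at
`r_m (cos θ_m, sin θ_m)` with `r_m = ∏_{i<m} cos (1/(2(i+1)))`. Since `∑ 1/i² < ∞` the radii stay
above `3/4`, while `θ_m → ∞` with steps tending to `0`, so the directions `θ_m` come arbitrarily
close to every angle modulo `2π` infinitely often. The centres therefore do not form a Cauchy
sequence, and since the Hausdorff distance of two unit discs is at least the distance of their
centres, neither do the `K_m`.
-/

open Real Finset

lemma one_sub_sum_le_prod_one_sub {ι : Type*} (s : Finset ι) {a : ι → ℝ} (h0 : ∀ i, 0 ≤ a i)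
    (h1 : ∀ i, a i ≤ 1) : 1 - ∑ i ∈ s, a i ≤ ∏ i ∈ s, (1 - a i) := by
  classical
  induction s using Finset.induction_on with
  | empty => simp
  | insert i s hi ih =>
    rw [sum_insert hi, prod_insert hi]
    have hprod : ∏ j ∈ s, (1 - a j) ≤ 1 :=
      prod_le_one (fun j _ => sub_nonneg.2 (h1 j)) fun j _ => sub_le_self _ (h0 j)
    nlinarith [h0 i, h1 i]

lemma exists_ge_mem_Icc_of_tendsto_atTop {θ : ℕ → ℝ} (hθ : Tendsto θ atTop atTop) {N : ℕ}
    {δ A : ℝ} (hstep : ∀ m ≥ N, θ (m + 1) ≤ θ m + δ) (hA : θ N < A) :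
    ∃ m ≥ N, θ m ∈ Icc A (A + δ) := by
  by_contra! h
  have hbelow : ∀ m ≥ N, θ m < A := by
    intro m hm
    induction m, hm using Nat.le_induction with
    | base => exact hA
    | succ m hm ih =>
      by_contra! hA'
      exact h (m + 1) (by omega) ⟨hA', by linarith [hstep m hm]⟩
  obtain ⟨m, hm⟩ := (hθ.eventually_ge_atTop A).exists_forall_of_atTop
  exact (hbelow (max m N) (le_max_right _ _)).not_ge (hm _ (le_max_left _ _))

section ConvexBodies

variable {n : ℕ}

lemma isConvexBody_closedBall (c : Euc n) {r : ℝ} (hr : 0 ≤ r) : IsConvexBody (closedBall c r) :=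
  ⟨nonempty_closedBall.2 hr, isCompact_closedBall c r, convex_closedBall c r⟩

lemma reflMap_image_closedBall {H : Submodule ℝ (Euc n)} {c : Euc n} (hc : c ∈ H) (r : ℝ) :
    reflMap H '' closedBall c r = closedBall c r := by
  rw [reflMap, LinearIsometryEquiv.image_closedBall, Submodule.reflection_mem_subspace_eq_self hc]

def projIterate (H : ℕ → Submodule ℝ (Euc n)) (p : Euc n) : ℕ → Euc n
  | 0 => (H 0).starProjection p
  | j + 1 => (H (j + 1)).starProjection (projIterate H p j)

namespace IsInF

variable {D : Submodule ℝ (Euc n) → Set (Euc n) → Set (Euc n)}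

theorem apply_closedBall (hD : IsInF D) {H : Submodule ℝ (Euc n)} (hbot : H ≠ ⊥) (htop : H ≠ ⊤)
    (c : Euc n) {r : ℝ} (hr : 0 ≤ r) :
    D H (closedBall c r) = closedBall (H.starProjection c) r := by
  have hsymm := reflMap_image_closedBall (H.starProjection_apply_mem c) r
  have := hD.transInv hbot htop (isConvexBody_closedBall _ hr) hsymm _
    (H.sub_starProjection_mem_orthogonal c)
  rwa [add_comm, singleton_add_closedBall, sub_add_cancel] at this

theorem iterSeq_closedBall (hD : IsInF D) {H : ℕ → Submodule ℝ (Euc n)} (hbot : ∀ m, H m ≠ ⊥)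
    (htop : ∀ m, H m ≠ ⊤) (p : Euc n) {r : ℝ} (hr : 0 ≤ r) (j : ℕ) :
    iterSeq (fun m => D (H m)) 0 (closedBall p r) j = closedBall (projIterate H p j) r := by
  induction j with
  | zero => exact hD.apply_closedBall (hbot 0) (htop 0) p hr
  | succ j ih =>
    rw [iterSeq, ih, zero_add, hD.apply_closedBall (hbot _) (htop _) _ hr, projIterate]

end IsInF

end ConvexBodies

section HausdorffDist

variable {E : Type*} [NormedAddCommGroup E] [NormedSpace ℝ E]

lemma dist_le_hausdorffDist_closedBall (a b : E) {r : ℝ} (hr : 0 ≤ r) :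
    dist a b ≤ hausdorffDist (closedBall a r) (closedBall b r) := by
  rcases eq_or_ne a b with rfl | hab
  · rw [dist_self]; exact hausdorffDist_nonneg
  have hd : 0 < dist a b := dist_pos.2 hab
  -- the point of `closedBall a r` farthest from `b`
  set x := a + (r / dist a b) • (a - b)
  have hx : x ∈ closedBall a r := by
    rw [mem_closedBall, dist_eq_norm, add_sub_cancel_left, norm_smul, ← dist_eq_norm,
      Real.norm_eq_abs, abs_of_nonneg (by positivity), div_mul_cancel₀ _ hd.ne']
  have hxb : dist x b = dist a b + r := by
    rw [dist_eq_norm, show x - b = (1 + r / dist a b) • (a - b) by simp only [x]; module,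
      norm_smul, ← dist_eq_norm, Real.norm_eq_abs, abs_of_nonneg (by positivity)]
    field_simp
  have hball : (closedBall b r).Nonempty := nonempty_closedBall.2 hr
  calc dist a b ≤ infDist x (closedBall b r) :=
        (le_infDist hball).2 fun y hy => by linarith [dist_triangle x y b, mem_closedBall.1 hy]
    _ ≤ _ := infDist_le_hausdorffDist_of_mem hx <| hausdorffEDist_ne_top_of_nonempty_of_bounded
        (nonempty_closedBall.2 hr) hball isBounded_closedBall isBounded_closedBall

lemma cauchySeq_of_tendsto_hausdorffDist_closedBall {c : ℕ → E} {r : ℝ} (hr : 0 ≤ r) {L : Set E}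
    (hL : Bornology.IsBounded L) (hLne : L.Nonempty)
    (h : Tendsto (fun j => hausdorffDist (closedBall (c j) r) L) atTop (𝓝 0)) : CauchySeq c := by
  refine Metric.cauchySeq_iff'.2 fun ε hε => ?_
  obtain ⟨N, hN⟩ := eventually_atTop.1 (h.eventually (gt_mem_nhds (half_pos hε)))
  refine ⟨N, fun j hj => ?_⟩
  have hfin : hausdorffEDist (closedBall (c j) r) L ≠ ⊤ :=
    hausdorffEDist_ne_top_of_nonempty_of_bounded (nonempty_closedBall.2 hr) hLne
      isBounded_closedBall hL
  calc dist (c j) (c N) ≤ hausdorffDist (closedBall (c j) r) (closedBall (c N) r) :=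
        dist_le_hausdorffDist_closedBall _ _ hr
    _ ≤ hausdorffDist (closedBall (c j) r) L + hausdorffDist L (closedBall (c N) r) :=
        hausdorffDist_triangle hfin
    _ < ε := by rw [hausdorffDist_comm (s := L)]; linarith [hN j hj, hN N le_rfl]

end HausdorffDist

section Directions

-- `(cos θ, sin θ)`, through the identification `ℂ ≃ ℝ²`
def dir (θ : ℝ) : Euc 2 := Complex.orthonormalBasisOneI.repr (Complex.exp (θ * Complex.I))

lemma norm_dir (θ : ℝ) : ‖dir θ‖ = 1 := by
  rw [dir, LinearIsometryEquiv.norm_map, Complex.norm_exp_ofReal_mul_I]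

lemma dist_dir_le (a b : ℝ) : dist (dir a) (dir b) ≤ |a - b| := by
  have h : Complex.exp (a * Complex.I) - Complex.exp (b * Complex.I)
      = Complex.exp (b * Complex.I) * (Complex.exp (Complex.I * ↑(a - b)) - 1) := by
    rw [mul_sub, ← Complex.exp_add]; push_cast; ring_nf
  rw [dir, dir, LinearIsometryEquiv.dist_map, dist_eq_norm, h, norm_mul,
    Complex.norm_exp_ofReal_mul_I, one_mul, ← Real.norm_eq_abs]
  exact Real.norm_exp_I_mul_ofReal_sub_one_le

lemma periodic_dir : Function.Periodic dir (2 * π) := by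
  intro θ
  simp only [dir]
  push_cast
  rw [add_mul, Complex.exp_add, Complex.exp_two_pi_mul_I, mul_one]

lemma dir_add_pi (θ : ℝ) : dir (θ + π) = -dir θ := by
  simp only [dir]
  push_cast
  rw [add_mul, Complex.exp_add, Complex.exp_pi_mul_I, mul_neg_one, map_neg]

lemma inner_dir (a b : ℝ) : inner ℝ (dir a) (dir b) = cos (b - a) := by
  rw [dir, dir, LinearIsometryEquiv.inner_map_map, Complex.inner, ← Complex.exp_conj,
    ← Complex.exp_add, map_mul, Complex.conj_ofReal, Complex.conj_I]
  rw [show (b:ℂ) * Complex.I + ↑a * -Complex.I = ((b - a : ℝ) : ℂ) * Complex.I by push_cast; ring,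
    Complex.exp_ofReal_mul_I_re]

lemma range_dir : range dir = sphere 0 1 := by
  refine Subset.antisymm (range_subset_iff.2 fun θ => mem_sphere_zero_iff_norm.2 (norm_dir θ)) ?_
  intro x hx
  refine ⟨Complex.arg (Complex.orthonormalBasisOneI.repr.symm x), ?_⟩
  have h1 : ‖Complex.orthonormalBasisOneI.repr.symm x‖ = 1 := by
    rw [LinearIsometryEquiv.norm_map]; exact mem_sphere_zero_iff_norm.1 hx
  have := Complex.norm_mul_exp_arg_mul_I (Complex.orthonormalBasisOneI.repr.symm x)
  rw [h1, Complex.ofReal_one, one_mul] at this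
  rw [dir, this, LinearIsometryEquiv.apply_symm_apply]

lemma dir_ne_zero (θ : ℝ) : dir θ ≠ 0 :=
  ne_zero_of_norm_ne_zero (by rw [norm_dir]; exact one_ne_zero)

lemma span_dir_ne_bot (θ : ℝ) : (ℝ ∙ dir θ) ≠ ⊥ :=
  Submodule.span_singleton_eq_bot.not.2 (dir_ne_zero θ)

lemma span_dir_ne_top (θ : ℝ) : (ℝ ∙ dir θ) ≠ ⊤ := by
  intro h
  have := finrank_span_singleton (K := ℝ) (dir_ne_zero θ)
  rw [h, finrank_top, finrank_euclideanSpace_fin] at this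
  exact absurd this (by norm_num)

lemma starProjection_span_dir (a b r : ℝ) :
    (ℝ ∙ dir b).starProjection (r • dir a) = (r * cos (a - b)) • dir b := by
  rw [Submodule.starProjection_singleton, norm_dir, real_inner_smul_right, inner_dir]
  simp

end Directions

def angleStep (i : ℕ) : ℝ := (2 * (i + 1))⁻¹

def angle (m : ℕ) : ℝ := ∑ i ∈ range m, angleStep i

def radius (m : ℕ) : ℝ := ∏ i ∈ range m, cos (angleStep i)

lemma angleStep_pos (i : ℕ) : 0 < angleStep i := by unfold angleStep; positivity

lemma tendsto_angleStep : Tendsto angleStep atTop (𝓝 0) := by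
  have := tendsto_one_div_add_atTop_nhds_zero_nat.const_mul (1 / 2 : ℝ)
  rw [mul_zero] at this
  refine this.congr fun i => ?_
  rw [angleStep]; field_simp

lemma angle_succ (m : ℕ) : angle (m + 1) = angle m + angleStep m := sum_range_succ _ _

lemma radius_succ (m : ℕ) : radius (m + 1) = radius m * cos (angleStep m) := prod_range_succ _ _

lemma tendsto_angle : Tendsto angle atTop atTop := by
  have := Real.tendsto_sum_range_one_div_nat_succ_atTop.const_mul_atTop (one_half_pos (α := ℝ))
  refine this.congr fun m => ?_
  rw [angle, mul_sum]
  refine sum_congr rfl fun i _ => ?_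
  rw [angleStep]; field_simp

lemma sum_angleStep_sq_le (m : ℕ) : ∑ i ∈ range m, angleStep i ^ 2 ≤ 1 / 2 := by
  have h := sum_Ioo_inv_sq_le (α := ℝ) 0 (m + 1)
  rw [show Finset.Ioo 0 (m + 1) = Finset.Ico 1 (m + 1) from rfl, sum_Ico_eq_sum_range,
    Nat.add_sub_cancel] at h
  have : ∑ i ∈ range m, angleStep i ^ 2 = (1 / 4) * ∑ i ∈ range m, ((1 + i : ℝ) ^ 2)⁻¹ := by
    rw [mul_sum]
    refine sum_congr rfl fun i _ => ?_
    rw [angleStep]; field_simp; ring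
  rw [this]; push_cast at h; linarith

lemma three_quarters_le_radius (m : ℕ) : 3 / 4 ≤ radius m := by
  have ha0 : ∀ i, 0 ≤ angleStep i ^ 2 / 2 := fun i => by positivity
  have ha1 : ∀ i, angleStep i ^ 2 / 2 ≤ 1 := fun i => by
    have : angleStep i ≤ 1 :=
      inv_le_one_of_one_le₀ (by linarith [(i.cast_nonneg : (0 : ℝ) ≤ i)])
    nlinarith [angleStep_pos i]
  calc 3 / 4 ≤ 1 - ∑ i ∈ range m, angleStep i ^ 2 / 2 := by
        rw [← sum_div]; linarith [sum_angleStep_sq_le m]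
    _ ≤ ∏ i ∈ range m, (1 - angleStep i ^ 2 / 2) := one_sub_sum_le_prod_one_sub _ ha0 ha1
    _ ≤ radius m := prod_le_prod (fun i _ => sub_nonneg.2 (ha1 i))
        fun i _ => one_sub_sq_div_two_le_cos

lemma exists_ge_dist_dir_angle_le (α : ℝ) {δ : ℝ} (hδ : 0 < δ) (N : ℕ) :
    ∃ m ≥ N, dist (dir (angle m)) (dir α) ≤ δ := by
  obtain ⟨M, hM⟩ := eventually_atTop.1 (tendsto_angleStep.eventually (ge_mem_nhds hδ))
  -- the first angle past a representative `A` of `α` overshoots `A` by at most one step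
  obtain ⟨A, hA, hαA⟩ := periodic_dir.exists_mem_Ioc two_pi_pos α (angle (max M N))
  obtain ⟨m, hm, hmA⟩ := exists_ge_mem_Icc_of_tendsto_atTop tendsto_angle
    (fun m hm => (angle_succ m).trans_le (add_le_add_right (hM m (le_of_max_le_left hm)) _)) hA.1
  refine ⟨m, le_of_max_le_right hm, ?_⟩
  rw [hαA]
  calc dist (dir (angle m)) (dir A) ≤ |angle m - A| := dist_dir_le _ _
    _ ≤ δ := abs_sub_le_iff.2 ⟨by linarith [hmA.2], by linarith [hmA.1]⟩

lemma sphere_subset_closure_range_dir_angle :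
    sphere (0 : Euc 2) 1 ⊆ closure (range fun m => dir (angle m)) := by
  rw [← range_dir]
  rintro _ ⟨α, rfl⟩
  refine Metric.mem_closure_iff.2 fun ε hε => ?_
  obtain ⟨m, -, hm⟩ := exists_ge_dist_dir_angle_le α (half_pos hε) 0
  exact ⟨_, mem_range_self m, by rw [dist_comm]; linarith⟩

lemma projIterate_span_dir_angle (j : ℕ) :
    projIterate (fun m => ℝ ∙ dir (angle m)) (dir 0) j = radius j • dir (angle j) := by
  induction j with
  | zero => simpa [projIterate, angle, radius] using starProjection_span_dir 0 0 1
  | succ j ih =>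
    rw [projIterate, ih, starProjection_span_dir, angle_succ, radius_succ, sub_add_cancel_left,
      cos_neg]

lemma not_cauchySeq_radius_smul_dir_angle : ¬ CauchySeq fun j => radius j • dir (angle j) := by
  rw [Metric.cauchySeq_iff]
  push Not
  refine ⟨1, one_pos, fun N => ?_⟩
  obtain ⟨j, hj, hj0⟩ := exists_ge_dist_dir_angle_le 0 (δ := 1 / 3) (by norm_num) N
  obtain ⟨k, hk, hkπ⟩ := exists_ge_dist_dir_angle_le π (δ := 1 / 3) (by norm_num) N
  refine ⟨j, hj, k, hk, ?_⟩
  have hj' := three_quarters_le_radius j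
  have hk' := three_quarters_le_radius k
  have hjk : dist (radius j • dir 0) (radius k • dir π) = radius j + radius k := by
    rw [show π = 0 + π by simp, dir_add_pi, dist_eq_norm, smul_neg, sub_neg_eq_add, ← add_smul,
      norm_smul, norm_dir, mul_one, Real.norm_eq_abs, abs_of_pos (by linarith)]
  have := dist_triangle4 (radius j • dir 0) (radius j • dir (angle j)) (radius k • dir (angle k))
    (radius k • dir π)
  rw [hjk, dist_smul₀, dist_smul₀ _ (dir (angle k)), Real.norm_eq_abs, Real.norm_eq_abs,
    abs_of_pos (by linarith), abs_of_pos (by linarith), dist_comm (dir 0)] at this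
  nlinarith

/-- For every symmetrization `D ∈ ℱ` on `𝒦²` there are a sequence of lines through the
origin (spanned by unit vectors `v_m`) whose unit direction vectors are dense in `S¹`, and a
convex body `K` with nonempty interior, such that the sequence
`(D_{U_m} ∘ ⋯ ∘ D_{U_1}) K`, with `U_m = span v_m`, does not converge in the Hausdorff
metric. -/
theorem stmt18 (D : Submodule ℝ (Euc 2) → Set (Euc 2) → Set (Euc 2)) (hD : IsInF D) :
    ∃ v : ℕ → Euc 2, (∀ m, ‖v m‖ = 1) ∧
      sphere (0 : Euc 2) 1 ⊆ closure {x : Euc 2 | ∃ m, x = v m ∨ x = -v m} ∧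
      ∃ K : Set (Euc 2), IsConvexBody K ∧ (interior K).Nonempty ∧
        ¬ ∃ L : Set (Euc 2), L.Nonempty ∧ IsCompact L ∧
          Tendsto (fun j => hausdorffDist (iterSeq (fun m => D (ℝ ∙ v m)) 0 K j) L)
            atTop (𝓝 0) := by
  refine ⟨fun m => dir (angle m), fun m => norm_dir _, ?_, closedBall (dir 0) 1,
    isConvexBody_closedBall _ zero_le_one, ?_, ?_⟩
  · refine sphere_subset_closure_range_dir_angle.trans (closure_mono ?_)
    rintro _ ⟨m, rfl⟩
    exact ⟨m, Or.inl rfl⟩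
  · rw [interior_closedBall _ one_ne_zero]
    exact nonempty_ball.2 one_pos
  · rintro ⟨L, hLne, hLc, hlim⟩
    simp only [hD.iterSeq_closedBall (fun m => span_dir_ne_bot _) (fun m => span_dir_ne_top _) _
      zero_le_one, projIterate_span_dir_angle] at hlim
    exact not_cauchySeq_radius_smul_dir_angle
      (cauchySeq_of_tendsto_hausdorffDist_closedBall zero_le_one hLc.isBounded hLne hlim)
end
end
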